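/- Backward recursion for feasible sets (correctness of the offline computation, equation (13)): for every time instant k ∈ [0, T] and every basic set I ∈ 𝕀_k that is reachable (i.e., x^I_{0:k-1} ≠ ∅) and with ι^root_I ≠ 1, the I-determined feasible set satisfies X_k^I = ⋃_{I_s ∈ succ(I,k)} ( H_k(I, I_s) ∩ Υ(X_{k+1}^{I_s}) ), where for k = T one sets X_{T+1}^{I'} := 𝒳 for every I'. -/

import Mathlib

namespace STLMon

/-- Three-valued satisfaction status: violated `0`, satisfied `1`, uncertain `?`. -/
inductive SatVal : Type
  | zero : SatVal
  | one : SatVal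
  | unk : SatVal
deriving DecidableEq

/-- Direction to a child in the syntax tree (`left` is also used for only-children). -/
inductive Dir : Type
  | left : Dir
  | right : Dir
deriving DecidableEq

/-- STL fragment (3): `Φ ::= G_{[a,b]} Φ | Φ₁ U'_{[a,b]} Φ₂ | Φ₁ ∧ Φ₂ | x ∈ ℋ`. -/
inductive Frag (X : Type) : Type
  | reg : Set X → Frag X
  | conj : Frag X → Frag X → Frag X
  | glob : ℕ → ℕ → Frag X → Frag X
  | untl : ℕ → ℕ → Frag X → Frag X → Frag X

namespace Frag

variable {X : Type}

/-- Semantics of the fragment: `fsat Φ x k` means `(x,k) ⊨ Φ`. -/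
def fsat : Frag X → (ℕ → X) → ℕ → Prop
  | reg H, x, k => x k ∈ H
  | conj φ ψ, x, k => fsat φ x k ∧ fsat ψ x k
  | glob a b φ, x, k => ∀ k', k + a ≤ k' → k' ≤ k + b → fsat φ x k'
  | untl a b φ ψ, x, k =>
      ∃ k', k + a ≤ k' ∧ k' ≤ k + b ∧ fsat ψ x k' ∧
        ∀ k'', k + a ≤ k'' → k'' ≤ k' → fsat φ x k''

/-- A node of the syntax tree of `Φ` is a path (list of directions) from the root;
`subAt Φ p` is the subformula `Φ^v` rooted at the node `v` with path `p`, if it exists. -/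
def subAt : Frag X → List Dir → Option (Frag X)
  | φ, [] => some φ
  | conj φ _, Dir.left :: p => subAt φ p
  | conj _ ψ, Dir.right :: p => subAt ψ p
  | glob _ _ φ, Dir.left :: p => subAt φ p
  | untl _ _ φ _, Dir.left :: p => subAt φ p
  | untl _ _ _ ψ, Dir.right :: p => subAt ψ p
  | _, _ => none

/-- Left endpoint `int^v` of the evaluation horizon of node `v`:
the sum of `a^{v'}` over all (strict) ancestors `v'` of `v`. -/
def intOf : Frag X → List Dir → ℕ
  | _, [] => 0
  | conj φ _, Dir.left :: p => intOf φ p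
  | conj _ ψ, Dir.right :: p => intOf ψ p
  | glob a _ φ, Dir.left :: p => a + intOf φ p
  | untl a _ φ _, Dir.left :: p => a + intOf φ p
  | untl a _ _ ψ, Dir.right :: p => a + intOf ψ p
  | _, _ => 0

/-- Right endpoint `end^v` of the evaluation horizon of node `v`:
the sum of `b^{v'}` over all (strict) ancestors `v'` of `v`. -/
def endOf : Frag X → List Dir → ℕ
  | _, [] => 0
  | conj φ _, Dir.left :: p => endOf φ p
  | conj _ ψ, Dir.right :: p => endOf ψ p
  | glob _ b φ, Dir.left :: p => b + endOf φ p
  | untl _ b φ _, Dir.left :: p => b + endOf φ p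
  | untl _ b _ ψ, Dir.right :: p => b + endOf ψ p
  | _, _ => 0

/-- `p` is an `ℋ`-node (a predicate leaf) of the syntax tree of `Φ`. -/
def IsHNode (Φ : Frag X) (p : List Dir) : Prop :=
  ∃ H : Set X, subAt Φ p = some (reg H)

/-- The satisfaction region `ℋ^v` attached to the `ℋ`-node at path `p`. -/
def regionAt (Φ : Frag X) (p : List Dir) : Set X :=
  match subAt Φ p with
  | some (reg H) => H
  | _ => ∅

/-- `(p, t)` is a meaningful entry of a basic set: `p` is an `ℋ`-node and
`t` lies in its evaluation horizon `[int^p, end^p]`. -/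
def Relevant (Φ : Frag X) (p : List Dir) (t : ℕ) : Prop :=
  IsHNode Φ p ∧ intOf Φ p ≤ t ∧ t ≤ endOf Φ p

/-- A basic set of satisfaction vectors: one three-valued entry for each `ℋ`-node
and each instant of its evaluation horizon. -/
def BasicSet (Φ : Frag X) : Type := ∀ p t, Relevant Φ p t → SatVal

/-- The entry of a basic set, totalized by `?` outside the relevant positions. -/
noncomputable def val (Φ : Frag X) (I : BasicSet Φ) (p : List Dir) (t : ℕ) : SatVal :=
  @dite _ (Relevant Φ p t) (Classical.dec _) (fun h => I p t h) (fun _ => SatVal.unk)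

open Classical in
/-- Induced satisfaction vectors (Definition 5): `ind β φ p t` is the induced value
`ι^v[t]` of the node `v` at path `p` carrying subformula `φ`, computed bottom-up from
the values `β` of the `ℋ`-node leaves. -/
noncomputable def ind (β : List Dir → ℕ → SatVal) : Frag X → List Dir → ℕ → SatVal
  | reg _, p, t => β p t
  | conj φ ψ, p, t =>
      if ind β φ (p ++ [Dir.left]) t = SatVal.zero ∨
         ind β ψ (p ++ [Dir.right]) t = SatVal.zero then SatVal.zero
      else if ind β φ (p ++ [Dir.left]) t = SatVal.one ∧
              ind β ψ (p ++ [Dir.right]) t = SatVal.one then SatVal.one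
      else SatVal.unk
  | glob a b φ, p, t =>
      if ∃ t', a ≤ t' ∧ t' ≤ b ∧ ind β φ (p ++ [Dir.left]) (t + t') = SatVal.zero then
        SatVal.zero
      else if ∀ t', a ≤ t' → t' ≤ b → ind β φ (p ++ [Dir.left]) (t + t') = SatVal.one then
        SatVal.one
      else SatVal.unk
  | untl a b φ ψ, p, t =>
      if (∀ t', a ≤ t' → t' ≤ b → ind β ψ (p ++ [Dir.right]) (t + t') = SatVal.zero) ∨
         (∀ t', a ≤ t' → t' ≤ b → ind β ψ (p ++ [Dir.right]) (t + t') = SatVal.one →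
            ∃ t'', a ≤ t'' ∧ t'' ≤ t' ∧ ind β φ (p ++ [Dir.left]) (t + t'') = SatVal.zero) then
        SatVal.zero
      else if ∃ t', a ≤ t' ∧ t' ≤ b ∧ ind β ψ (p ++ [Dir.right]) (t + t') = SatVal.one ∧
              ∀ t'', a ≤ t'' → t'' ≤ t' → ind β φ (p ++ [Dir.left]) (t + t'') = SatVal.one then
        SatVal.one
      else SatVal.unk

open Classical in
/-- Online update of a basic set upon observing state `xk` at instant `k`:
in each `ℋ`-node vector whose horizon contains `k`, only the entry at position `k`
is changed, to `1` if `xk ∈ ℋ^{v_i}` and to `0` otherwise. -/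
noncomputable def updateB (Φ : Frag X) (I : BasicSet Φ) (k : ℕ) (xk : X) : BasicSet Φ :=
  fun p t h =>
    if t = k then (if xk ∈ regionAt Φ p then SatVal.one else SatVal.zero) else I p t h

/-- The initial basic set `I₀`: every entry is `?`. -/
def initB (Φ : Frag X) : BasicSet Φ := fun _ _ _ => SatVal.unk

/-- `basicOf Φ x k` is `I(x_{0:k-1})`, obtained from `I₀` by successive updates
with `x 0, …, x (k-1)`. -/
noncomputable def basicOf (Φ : Frag X) (x : ℕ → X) : ℕ → BasicSet Φ
  | 0 => initB Φ
  | k + 1 => updateB Φ (basicOf Φ x k) k (x k)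

/-- Membership in `𝓘_k`: entries are `?` exactly at positions `t ≥ k`. -/
def InFam (Φ : Frag X) (I : BasicSet Φ) (k : ℕ) : Prop :=
  ∀ p t (h : Relevant Φ p t), (I p t h = SatVal.unk ↔ k ≤ t)

/-- The induced root satisfaction value `ι^root_I[0]` of a basic set `I`. -/
noncomputable def rootVal (Φ : Frag X) (I : BasicSet Φ) : SatVal :=
  ind (val Φ I) Φ [] 0

/-- `Is ∈ succ(I, k)`: `I ∈ 𝕀_k`, `Is ∈ 𝕀_{k+1}`, and `Is` agrees with `I`
on every `ℋ`-node entry at positions `t ∈ [int^v, min(k-1, end^v)]`. -/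
def Succ (Φ : Frag X) (k : ℕ) (I Is : BasicSet Φ) : Prop :=
  InFam Φ I k ∧ rootVal Φ I ≠ SatVal.zero ∧
  InFam Φ Is (k + 1) ∧ rootVal Φ Is ≠ SatVal.zero ∧
  ∀ p t (h : Relevant Φ p t), t < k → I p t h = Is p t h

/-- The consistent region `H_k(I, I_s) = ⋂ᵢ H_{i,k}`, where `H_{i,k}` is `ℋ^{v_i}` if
`ι_s^{v_i}[k] = 1`, the complement of `ℋ^{v_i}` if `ι_s^{v_i}[k] = 0`, and `𝒳` if `k`
is outside the horizon of `v_i`. -/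
def consReg (Φ : Frag X) (Is : BasicSet Φ) (k : ℕ) : Set X :=
  {x | ∀ p (h : Relevant Φ p k),
        (Is p k h = SatVal.zero → x ∉ regionAt Φ p) ∧
        (Is p k h = SatVal.one → x ∈ regionAt Φ p)}

end Frag

/-- Trajectory of the control system `x_{k+1} = f(x_k, u_k)`:
`traj f x u n` is the state after `n` steps from `x` under inputs `u`. -/
def traj {X U : Type} (f : X → U → X) (x : X) (u : ℕ → U) : ℕ → X
  | 0 => x
  | n + 1 => f (traj f x u n) (u n)

/-- The signal obtained from the prefix `xpre` on positions `0, …, k-1` followed by the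
state `xk` at position `k` and the trajectory `ξ_f(xk, u)` afterwards. -/
def runFrom {X U : Type} (f : X → U → X) (k : ℕ) (xpre : ℕ → X) (xk : X) (u : ℕ → U) :
    ℕ → X :=
  fun n => if n < k then xpre n else traj f xk u (n - k)

/-- One-step feasible set `Υ(S) = {x | ∃ u ∈ 𝒰, f(x,u) ∈ S}`. -/
def oneStep {X U : Type} (f : X → U → X) (S : Set X) : Set X :=
  {x | ∃ u : U, f x u ∈ S}

/-- The `I`-determined feasible set `X_k^I`: states `xk` from which some control makes the
signal, consisting of some prefix consistent with `I` followed by `xk` and the resulting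
trajectory, satisfy `Φ`. -/
noncomputable def feasSet {X U : Type} (Φ : Frag X) (f : X → U → X) (k : ℕ)
    (I : Frag.BasicSet Φ) : Set X :=
  {xk | ∃ xpre : ℕ → X, Frag.basicOf Φ xpre k = I ∧
          ∃ u : ℕ → U, Frag.fsat Φ (runFrom f k xpre xk u) 0}

end STLMon

open STLMon STLMon.Frag

/-!
The successors `I_s` of `I` whose consistent region `H_k(I, I_s)` contains a state `x_k` are
exactly `update(I, x_k)`, so the union collapses to a single term. A feasible `x_k` has a
satisfying continuation; it witnesses `Υ(X_{k+1}^{update(I, x_k)})`, and it keeps the root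
verdict of the observed basic sets away from `0`, which puts `update(I, x_k)` in `𝕀_{k+1}`.
Conversely, once every horizon position is observed the root verdict is the truth value, so
satisfaction depends only on the basic set at `k + 1` and on the future of the signal; gluing a
prefix realising `I` and `x_k` to a continuation witnessing `X_{k+1}` therefore gives a
satisfying signal. The delicate step is the persistence of a non-`0` verdict: for `U'`, an
observed witness of `Φ₂` later than the true one carries its verdict back to the true one,
because observations are truthful and fill each horizon from the left.
-/

namespace STLMon

namespace SatVal

theorem eq_ite_of {v : SatVal} {P : Prop} [Decidable P] (h1 : P → v = one)
    (h0 : v ≠ zero → P) : v = if P then one else zero := by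
  split_ifs with hP
  · exact h1 hP
  · exact not_not.mp (mt h0 hP)

variable {Z O : Prop} {_ : Decidable Z} {_ : Decidable O}

theorem ite_ne_zero : (if Z then zero else if O then one else unk) ≠ zero ↔ ¬Z := by
  split_ifs <;> simp_all

theorem ite_eq_one : (if Z then zero else if O then one else unk) = one ↔ ¬Z ∧ O := by
  split_ifs <;> simp_all

end SatVal

namespace Frag

variable {X : Type}

theorem subAt_nil (Φ : Frag X) : subAt Φ [] = some Φ := by cases Φ <;> rfl

theorem subAt_append (Φ : Frag X) (p q : List Dir) :
    subAt Φ (p ++ q) = (subAt Φ p).bind (fun ψ => subAt ψ q) := by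
  induction p generalizing Φ with
  | nil => simp [subAt]
  | cons d p ih => cases Φ <;> cases d <;> simp [subAt, ih]

theorem intOf_append {Φ φ : Frag X} {p : List Dir} (q : List Dir) (h : subAt Φ p = some φ) :
    intOf Φ (p ++ q) = intOf Φ p + intOf φ q := by
  induction p generalizing Φ with
  | nil => rw [subAt_nil, Option.some_inj] at h; subst h; simp [intOf]
  | cons d p ih => cases Φ <;> cases d <;> simp_all [subAt, intOf] <;> omega

theorem endOf_append {Φ φ : Frag X} {p : List Dir} (q : List Dir) (h : subAt Φ p = some φ) :
    endOf Φ (p ++ q) = endOf Φ p + endOf φ q := by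
  induction p generalizing Φ with
  | nil => rw [subAt_nil, Option.some_inj] at h; subst h; simp [endOf]
  | cons d p ih => cases Φ <;> cases d <;> simp_all [subAt, endOf] <;> omega

def IsChild (Φ : Frag X) (p : List Dir) (d : Dir) (χ : Frag X) (a b : ℕ) : Prop :=
  subAt Φ (p ++ [d]) = some χ ∧ intOf Φ (p ++ [d]) = intOf Φ p + a ∧
    endOf Φ (p ++ [d]) = endOf Φ p + b

section Children

variable {Φ φ ψ : Frag X} {p : List Dir} {a b : ℕ}

theorem isChild_conj (h : subAt Φ p = some (conj φ ψ)) :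
    IsChild Φ p Dir.left φ 0 0 ∧ IsChild Φ p Dir.right ψ 0 0 := by
  simp [IsChild, subAt_append, intOf_append _ h, endOf_append _ h, h, subAt, intOf, endOf]

theorem isChild_glob (h : subAt Φ p = some (glob a b φ)) : IsChild Φ p Dir.left φ a b := by
  simp [IsChild, subAt_append, intOf_append _ h, endOf_append _ h, h, subAt, intOf, endOf]

theorem isChild_untl (h : subAt Φ p = some (untl a b φ ψ)) :
    IsChild Φ p Dir.left φ a b ∧ IsChild Φ p Dir.right ψ a b := by
  simp [IsChild, subAt_append, intOf_append _ h, endOf_append _ h, h, subAt, intOf, endOf]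

end Children

section Induced

variable {β : List Dir → ℕ → SatVal} {φ ψ : Frag X} {p : List Dir} {t a b : ℕ}

theorem ind_conj_eq_one : ind β (conj φ ψ) p t = SatVal.one ↔
    ind β φ (p ++ [Dir.left]) t = SatVal.one ∧ ind β ψ (p ++ [Dir.right]) t = SatVal.one := by
  rw [ind, SatVal.ite_eq_one]
  exact and_iff_right_of_imp fun ⟨h1, h2⟩ => by simp [h1, h2]

theorem ind_conj_ne_zero : ind β (conj φ ψ) p t ≠ SatVal.zero ↔
    ind β φ (p ++ [Dir.left]) t ≠ SatVal.zero ∧ ind β ψ (p ++ [Dir.right]) t ≠ SatVal.zero := by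
  rw [ind, SatVal.ite_ne_zero, not_or]

theorem ind_glob_eq_one : ind β (glob a b φ) p t = SatVal.one ↔
    ∀ t', a ≤ t' → t' ≤ b → ind β φ (p ++ [Dir.left]) (t + t') = SatVal.one := by
  rw [ind, SatVal.ite_eq_one]
  exact and_iff_right_of_imp fun h ⟨t', ha, hb, h0⟩ => by simp [h t' ha hb] at h0

theorem ind_glob_ne_zero : ind β (glob a b φ) p t ≠ SatVal.zero ↔
    ∀ t', a ≤ t' → t' ≤ b → ind β φ (p ++ [Dir.left]) (t + t') ≠ SatVal.zero := by
  rw [ind, SatVal.ite_ne_zero]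
  push Not
  rfl

theorem ind_untl_eq_one : ind β (untl a b φ ψ) p t = SatVal.one ↔
    ∃ w, a ≤ w ∧ w ≤ b ∧ ind β ψ (p ++ [Dir.right]) (t + w) = SatVal.one ∧
      ∀ t', a ≤ t' → t' ≤ w → ind β φ (p ++ [Dir.left]) (t + t') = SatVal.one := by
  rw [ind, SatVal.ite_eq_one]
  refine and_iff_right_of_imp fun ⟨w, ha, hb, hψ, hφ⟩ => ?_
  rintro (h0 | h0)
  · exact absurd (h0 w ha hb) (by simp [hψ])
  · obtain ⟨t', ha', hb', h⟩ := h0 w ha hb hψ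
    simp [hφ t' ha' hb'] at h

theorem ind_untl_ne_zero : ind β (untl a b φ ψ) p t ≠ SatVal.zero ↔
    ∃ w, a ≤ w ∧ w ≤ b ∧ ind β ψ (p ++ [Dir.right]) (t + w) = SatVal.one ∧
      ∀ t', a ≤ t' → t' ≤ w → ind β φ (p ++ [Dir.left]) (t + t') ≠ SatVal.zero := by
  rw [ind, SatVal.ite_ne_zero, not_or]
  push Not
  exact and_iff_right_of_imp fun ⟨w, ha, hb, hψ, _⟩ => ⟨w, ha, hb, by simp [hψ]⟩

end Induced

section Semantics

variable {x : ℕ → X} {φ ψ : Frag X} {t a b : ℕ}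

theorem fsat_glob_iff :
    fsat (glob a b φ) x t ↔ ∀ t', a ≤ t' → t' ≤ b → fsat φ x (t + t') := by
  refine ⟨fun h t' ha hb => h _ (by omega) (by omega), fun h k hk hk' => ?_⟩
  simpa [Nat.add_sub_cancel' (le_of_add_le_left hk)] using h (k - t) (by omega) (by omega)

theorem fsat_untl_iff : fsat (untl a b φ ψ) x t ↔
    ∃ w, a ≤ w ∧ w ≤ b ∧ fsat ψ x (t + w) ∧ ∀ t', a ≤ t' → t' ≤ w → fsat φ x (t + t') := by
  constructor
  · rintro ⟨k, hk, hk', hψ, hφ⟩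
    refine ⟨k - t, by omega, by omega, by rwa [Nat.add_sub_cancel' (by omega)],
      fun t' ha hb => hφ _ (by omega) (by omega)⟩
  · rintro ⟨w, ha, hb, hψ, hφ⟩
    refine ⟨t + w, by omega, by omega, hψ, fun k hk hk' => ?_⟩
    simpa [Nat.add_sub_cancel' (le_of_add_le_left hk)] using hφ (k - t) (by omega) (by omega)

end Semantics

theorem regionAt_of_subAt {Φ : Frag X} {p : List Dir} {H : Set X}
    (h : subAt Φ p = some (reg H)) : regionAt Φ p = H := by
  rw [regionAt, h]

def ZeroSound (Φ : Frag X) (x : ℕ → X) (β : List Dir → ℕ → SatVal) : Prop :=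
  ∀ q u, β q u = SatVal.zero → x u ∉ regionAt Φ q

def PrefixClosed (Φ : Frag X) (β : List Dir → ℕ → SatVal) : Prop :=
  ∀ q u u', u ≤ u' → Relevant Φ q u → β q u' ≠ SatVal.unk → β q u ≠ SatVal.unk

open Classical in
def FullyObserved (Φ : Frag X) (x : ℕ → X) (β : List Dir → ℕ → SatVal) : Prop :=
  ∀ q u, Relevant Φ q u → β q u = if x u ∈ regionAt Φ q then SatVal.one else SatVal.zero

section Verdicts

variable {Φ : Frag X} {x : ℕ → X} {β β' : List Dir → ℕ → SatVal}

theorem ind_eq_one_mono (hmono : ∀ q u, β q u = SatVal.one → β' q u = SatVal.one)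
    (φ : Frag X) : ∀ {p t}, ind β φ p t = SatVal.one → ind β' φ p t = SatVal.one := by
  induction φ with
  | reg H => exact fun h => hmono _ _ h
  | conj φ ψ ihφ ihψ =>
    simp only [ind_conj_eq_one]
    exact fun h => ⟨ihφ h.1, ihψ h.2⟩
  | glob a b φ ihφ =>
    simp only [ind_glob_eq_one]
    exact fun h t' ha hb => ihφ (h t' ha hb)
  | untl a b φ ψ ihφ ihψ =>
    simp only [ind_untl_eq_one]
    exact fun ⟨w, ha, hb, hψ, hφ⟩ => ⟨w, ha, hb, ihψ hψ, fun t' ha' hb' => ihφ (hφ t' ha' hb')⟩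

open Classical in
theorem ind_eq_ite_fsat (hβ : FullyObserved Φ x β) (φ : Frag X) :
    ∀ {p t}, subAt Φ p = some φ → intOf Φ p ≤ t → t ≤ endOf Φ p →
      ind β φ p t = if fsat φ x t then SatVal.one else SatVal.zero := by
  induction φ with
  | reg H =>
    intro p t hp ht ht'
    change β p t = _
    rw [hβ p t ⟨⟨H, hp⟩, ht, ht'⟩, regionAt_of_subAt hp]
    rfl
  | conj φ ψ ihφ ihψ =>
    intro p t hp ht ht'
    obtain ⟨⟨hpl, hil, hel⟩, hpr, hir, her⟩ := isChild_conj hp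
    have eφ := ihφ (t := t) hpl (by omega) (by omega)
    have eψ := ihψ (t := t) hpr (by omega) (by omega)
    refine SatVal.eq_ite_of (fun hf => ind_conj_eq_one.mpr ?_) (fun h => ?_)
    · rw [eφ, eψ, if_pos hf.1, if_pos hf.2]
      exact ⟨rfl, rfl⟩
    · rw [ind_conj_ne_zero, eφ, eψ] at h
      simpa [fsat] using h
  | glob a b φ ihφ =>
    intro p t hp ht ht'
    obtain ⟨hpl, hil, hel⟩ := isChild_glob hp
    have e : ∀ t', a ≤ t' → t' ≤ b → _ := fun t' _ _ => ihφ (t := t + t') hpl (by omega) (by omega)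
    refine SatVal.eq_ite_of (fun hf => ind_glob_eq_one.mpr fun t' ha hb => ?_)
      (fun h => fsat_glob_iff.mpr fun t' ha hb => ?_)
    · rw [e t' ha hb, if_pos (fsat_glob_iff.mp hf t' ha hb)]
    · simpa [e t' ha hb] using ind_glob_ne_zero.mp h t' ha hb
  | untl a b φ ψ ihφ ihψ =>
    intro p t hp ht ht'
    obtain ⟨⟨hpl, hil, hel⟩, hpr, hir, her⟩ := isChild_untl hp
    have eφ : ∀ t', a ≤ t' → t' ≤ b → _ := fun t' _ _ => ihφ (t := t + t') hpl (by omega) (by omega)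
    have eψ : ∀ t', a ≤ t' → t' ≤ b → _ := fun t' _ _ => ihψ (t := t + t') hpr (by omega) (by omega)
    refine SatVal.eq_ite_of (fun hf => ?_) (fun h => ?_)
    · obtain ⟨v, hav, hvb, hψ, hφ⟩ := fsat_untl_iff.mp hf
      refine ind_untl_eq_one.mpr ⟨v, hav, hvb, by rw [eψ v hav hvb, if_pos hψ], fun t' ha hb => ?_⟩
      rw [eφ t' ha (hb.trans hvb), if_pos (hφ t' ha hb)]
    · obtain ⟨w, haw, hwb, hψ, hφ⟩ := ind_untl_ne_zero.mp h
      refine fsat_untl_iff.mpr ⟨w, haw, hwb, by simpa [eψ w haw hwb] using hψ, fun t' ha hb => ?_⟩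
      simpa [eφ t' ha (hb.trans hwb)] using hφ t' ha hb

theorem ind_eq_one_of_le (h0 : ZeroSound Φ x β) (hpre : PrefixClosed Φ β) (φ : Frag X) :
    ∀ {p s s'}, subAt Φ p = some φ → intOf Φ p ≤ s → s' ≤ endOf Φ p → s ≤ s' →
      fsat φ x s → ind β φ p s' = SatVal.one → ind β φ p s = SatVal.one := by
  induction φ with
  | reg H =>
    intro p s s' hp hs hs' hss hf h
    change β p s' = _ at h
    change β p s = _
    cases hv : β p s with
    | zero => exact absurd hf (regionAt_of_subAt hp ▸ h0 p s hv)
    | one => rfl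
    | unk => exact absurd hv (hpre p s s' hss ⟨⟨H, hp⟩, hs, hss.trans hs'⟩ (by simp [h]))
  | conj φ ψ ihφ ihψ =>
    intro p s s' hp hs hs' hss hf h
    obtain ⟨⟨hpl, hil, hel⟩, hpr, hir, her⟩ := isChild_conj hp
    rw [ind_conj_eq_one] at h ⊢
    exact ⟨ihφ hpl (by omega) (by omega) hss hf.1 h.1,
      ihψ hpr (by omega) (by omega) hss hf.2 h.2⟩
  | glob a b φ ihφ =>
    intro p s s' hp hs hs' hss hf h
    obtain ⟨hpl, hil, hel⟩ := isChild_glob hp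
    rw [ind_glob_eq_one] at h ⊢
    exact fun t' ha hb => ihφ hpl (by omega) (by omega) (by omega)
      (fsat_glob_iff.mp hf t' ha hb) (h t' ha hb)
  | untl a b φ ψ ihφ ihψ =>
    intro p s s' hp hs hs' hss hf h
    obtain ⟨⟨hpl, hil, hel⟩, hpr, hir, her⟩ := isChild_untl hp
    obtain ⟨w, haw, hwb, hψ, hφ⟩ := ind_untl_eq_one.mp h
    obtain ⟨v, hav, hvb, hψv, hφv⟩ := fsat_untl_iff.mp hf
    -- below `s' + a` the verdict on `φ` is pulled down from the one at `s' + a`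
    have hφ' : ∀ t', a ≤ t' → s + t' ≤ s' + w → fsat φ x (s + t') →
        ind β φ (p ++ [Dir.left]) (s + t') = SatVal.one := by
      intro t' ha hw hft
      by_cases hc : s' + a ≤ s + t'
      · simpa [Nat.add_sub_cancel' (le_of_add_le_left hc)] using
          hφ (s + t' - s') (by omega) (by omega)
      · exact ihφ hpl (by omega) (by omega) (by omega) hft (hφ a le_rfl haw)
    rcases le_or_gt (s + v) (s' + w) with hc | hc
    · exact ind_untl_eq_one.mpr ⟨v, hav, hvb, ihψ hpr (by omega) (by omega) hc hψv hψ,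
        fun t' ha hb => hφ' t' ha (by omega) (hφv t' ha hb)⟩
    · refine ind_untl_eq_one.mpr ⟨s' + w - s, by omega, by omega, ?_,
        fun t' ha hb => hφ' t' ha (by omega) (hφv t' ha (by omega))⟩
      rwa [Nat.add_sub_cancel' (by omega)]

theorem ind_ne_zero_of_refines (h0 : ZeroSound Φ x β) (hpre : PrefixClosed Φ β)
    (h0' : ZeroSound Φ x β') (hmono : ∀ q u, β q u = SatVal.one → β' q u = SatVal.one)
    (φ : Frag X) : ∀ {p t}, subAt Φ p = some φ → intOf Φ p ≤ t → t ≤ endOf Φ p →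
      fsat φ x t → ind β φ p t ≠ SatVal.zero → ind β' φ p t ≠ SatVal.zero := by
  induction φ with
  | reg H =>
    intro p t hp _ _ hf _ hv
    exact h0' p t hv (regionAt_of_subAt hp ▸ hf)
  | conj φ ψ ihφ ihψ =>
    intro p t hp ht ht' hf h
    obtain ⟨⟨hpl, hil, hel⟩, hpr, hir, her⟩ := isChild_conj hp
    rw [ind_conj_ne_zero] at h ⊢
    exact ⟨ihφ hpl (by omega) (by omega) hf.1 h.1, ihψ hpr (by omega) (by omega) hf.2 h.2⟩
  | glob a b φ ihφ =>
    intro p t hp ht ht' hf h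
    obtain ⟨hpl, hil, hel⟩ := isChild_glob hp
    rw [ind_glob_ne_zero] at h ⊢
    exact fun t' ha hb => ihφ hpl (by omega) (by omega) (fsat_glob_iff.mp hf t' ha hb)
      (h t' ha hb)
  | untl a b φ ψ ihφ ihψ =>
    intro p t hp ht ht' hf h
    obtain ⟨⟨hpl, hil, hel⟩, hpr, hir, her⟩ := isChild_untl hp
    obtain ⟨w, haw, hwb, hψ, hφ⟩ := ind_untl_ne_zero.mp h
    obtain ⟨v, hav, hvb, hψv, hφv⟩ := fsat_untl_iff.mp hf
    refine ind_untl_ne_zero.mpr ?_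
    rcases le_total w v with hc | hc
    · exact ⟨w, haw, hwb, ind_eq_one_mono hmono ψ hψ, fun t' ha hb =>
        ihφ hpl (by omega) (by omega) (hφv t' ha (by omega)) (hφ t' ha hb)⟩
    · -- the observed `ψ`-witness lies after the true one, so its verdict moves back to it
      have hψ' := ind_eq_one_of_le h0 hpre ψ hpr (by omega) (by omega) (by omega) hψv hψ
      exact ⟨v, hav, hvb, ind_eq_one_mono hmono ψ hψ', fun t' ha hb =>
        ihφ hpl (by omega) (by omega) (hφv t' ha hb) (hφ t' ha (by omega))⟩

end Verdicts

section Observation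

variable {Φ : Frag X} {I Is : BasicSet Φ} {k : ℕ} {xk : X}

theorem updateB_apply_of_ne {p : List Dir} {t : ℕ} (h : Relevant Φ p t) (ht : t ≠ k) :
    updateB Φ I k xk p t h = I p t h :=
  if_neg ht

theorem inFam_updateB (hI : InFam Φ I k) : InFam Φ (updateB Φ I k xk) (k + 1) := by
  intro p t h
  by_cases ht : t = k
  · subst ht
    simp only [updateB, if_true]
    split_ifs <;> simp
  · rw [updateB_apply_of_ne h ht, hI p t h]
    omega

theorem mem_consReg_updateB : xk ∈ consReg Φ (updateB Φ I k xk) k := by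
  intro p h
  simp only [updateB, if_true]
  split_ifs <;> simp_all

theorem succ_updateB (hI : InFam Φ I k) (hI0 : rootVal Φ I ≠ SatVal.zero)
    (h0 : rootVal Φ (updateB Φ I k xk) ≠ SatVal.zero) : Succ Φ k I (updateB Φ I k xk) :=
  ⟨hI, hI0, inFam_updateB hI, h0, fun _ _ h ht => (updateB_apply_of_ne h ht.ne).symm⟩

theorem eq_updateB_of_mem_consReg (hS : Succ Φ k I Is) (hx : xk ∈ consReg Φ Is k) :
    Is = updateB Φ I k xk := by
  obtain ⟨hI, -, hIs, -, hagree⟩ := hS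
  funext p t h
  rcases lt_trichotomy t k with ht | rfl | ht
  · rw [updateB_apply_of_ne h ht.ne, hagree p t h ht]
  · have hne : Is p t h ≠ SatVal.unk := fun hu => by have := (hIs p t h).1 hu; omega
    obtain ⟨h0, h1⟩ := hx p h
    simp only [updateB, if_true]
    cases hv : Is p t h <;> simp_all
  · rw [updateB_apply_of_ne h ht.ne', (hIs p t h).2 ht, (hI p t h).2 ht.le]

theorem mem_iUnion_succ_iff (hI : InFam Φ I k) (hI0 : rootVal Φ I ≠ SatVal.zero)
    (S : BasicSet Φ → Set X) :
    xk ∈ ⋃ Is ∈ {J : BasicSet Φ | Succ Φ k I J}, (consReg Φ Is k ∩ S Is) ↔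
      rootVal Φ (updateB Φ I k xk) ≠ SatVal.zero ∧ xk ∈ S (updateB Φ I k xk) := by
  simp only [Set.mem_iUnion₂, Set.mem_inter_iff, Set.mem_ofPred_eq, exists_prop]
  constructor
  · rintro ⟨Is, hS, hx, hSx⟩
    obtain rfl := eq_updateB_of_mem_consReg hS hx
    exact ⟨hS.2.2.2.1, hSx⟩
  · rintro ⟨h0, hSx⟩
    exact ⟨_, succ_updateB hI hI0 h0, mem_consReg_updateB, hSx⟩

end Observation

section Signals

variable {Φ : Frag X} {x y : ℕ → X} {m : ℕ}

open Classical in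
theorem basicOf_apply (x : ℕ → X) (m : ℕ) {p : List Dir} {t : ℕ} (h : Relevant Φ p t) :
    basicOf Φ x m p t h =
      if t < m then (if x t ∈ regionAt Φ p then SatVal.one else SatVal.zero)
      else SatVal.unk := by
  induction m with
  | zero => simp [basicOf, initB]
  | succ m ih =>
    rw [basicOf, updateB]
    split_ifs <;> simp_all <;> omega

open Classical in
theorem val_basicOf (q : List Dir) (u : ℕ) :
    val Φ (basicOf Φ x m) q u =
      if Relevant Φ q u ∧ u < m then
        (if x u ∈ regionAt Φ q then SatVal.one else SatVal.zero)
      else SatVal.unk := by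
  rw [val]
  split_ifs <;> simp_all [basicOf_apply]

theorem inFam_basicOf (x : ℕ → X) (m : ℕ) : InFam Φ (basicOf Φ x m) m := by
  induction m with
  | zero => intro p t h; simp [basicOf, initB]
  | succ m ih => exact inFam_updateB ih

theorem zeroSound_val_basicOf : ZeroSound Φ x (val Φ (basicOf Φ x m)) := by
  intro q u
  rw [val_basicOf]
  split_ifs <;> simp_all

theorem prefixClosed_val_basicOf : PrefixClosed Φ (val Φ (basicOf Φ x m)) := by
  intro q u u' hu hrel
  simp only [val_basicOf]
  split_ifs <;> simp_all <;> omega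

theorem val_basicOf_eq_one_mono {m' : ℕ} (hm : m ≤ m') (q : List Dir) (u : ℕ)
    (h : val Φ (basicOf Φ x m) q u = SatVal.one) : val Φ (basicOf Φ x m') q u = SatVal.one := by
  rw [val_basicOf] at h ⊢
  split_ifs at h ⊢ <;> simp_all
  omega

theorem fullyObserved_val_basicOf (hN : ∀ q u, Relevant Φ q u → u < m) :
    FullyObserved Φ x (val Φ (basicOf Φ x m)) := by
  intro q u hu
  rw [val_basicOf, if_pos ⟨hu, hN q u hu⟩]

theorem rootVal_basicOf_ne_zero_of_le {m' : ℕ} (hsat : fsat Φ x 0) (hm : m ≤ m')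
    (h : rootVal Φ (basicOf Φ x m) ≠ SatVal.zero) :
    rootVal Φ (basicOf Φ x m') ≠ SatVal.zero :=
  ind_ne_zero_of_refines zeroSound_val_basicOf prefixClosed_val_basicOf zeroSound_val_basicOf
    (val_basicOf_eq_one_mono hm) Φ (subAt_nil Φ) (by simp [intOf]) (Nat.zero_le _) hsat h

theorem fsat_iff_rootVal_basicOf_ne_zero (hN : ∀ q u, Relevant Φ q u → u < m) :
    fsat Φ x 0 ↔ rootVal Φ (basicOf Φ x m) ≠ SatVal.zero := by
  rw [rootVal, ind_eq_ite_fsat (fullyObserved_val_basicOf hN) Φ (subAt_nil Φ) (by simp [intOf])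
    (Nat.zero_le _)]
  split_ifs <;> simp_all

theorem basicOf_congr (h : ∀ t < m, x t = y t) : basicOf Φ x m = basicOf Φ y m := by
  induction m with
  | zero => rfl
  | succ m ih => rw [basicOf, basicOf, ih fun t ht => h t (by omega), h m m.lt_succ_self]

theorem basicOf_eq_of_le {n : ℕ} (hm : basicOf Φ x m = basicOf Φ y m)
    (h : ∀ t, m ≤ t → x t = y t) (hmn : m ≤ n) : basicOf Φ x n = basicOf Φ y n := by
  induction n, hmn using Nat.le_induction with
  | base => exact hm
  | succ n hmn ih => rw [basicOf, basicOf, ih, h n hmn]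

theorem fsat_iff_of_basicOf_eq {N : ℕ} (hN : ∀ q u, Relevant Φ q u → u < N)
    (hm : basicOf Φ x m = basicOf Φ y m) (h : ∀ t, m ≤ t → x t = y t) :
    fsat Φ x 0 ↔ fsat Φ y 0 := by
  have hN' : ∀ q u, Relevant Φ q u → u < max m N :=
    fun q u hu => lt_max_of_lt_right (hN q u hu)
  rw [fsat_iff_rootVal_basicOf_ne_zero hN', fsat_iff_rootVal_basicOf_ne_zero hN',
    basicOf_eq_of_le hm h (le_max_left m N)]

end Signals

end Frag

section Trajectories

variable {X U : Type} {f : X → U → X} {k n : ℕ} {xpre : ℕ → X} {xk : X} {u : ℕ → U}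

theorem traj_succ' (x : X) (u : ℕ → U) (n : ℕ) :
    traj f x u (n + 1) = traj f (f x (u 0)) (fun i => u (i + 1)) n := by
  induction n with
  | zero => rfl
  | succ n ih => rw [traj, ih]; rfl

theorem runFrom_of_lt (h : n < k) : runFrom f k xpre xk u n = xpre n := if_pos h

theorem runFrom_self : runFrom f k xpre xk u k = xk := by simp [runFrom, traj]

theorem runFrom_eq_runFrom_succ (w : ℕ → X) (h : k < n) :
    runFrom f k xpre xk u n = runFrom f (k + 1) w (f xk (u 0)) (fun i => u (i + 1)) n := by
  simp only [runFrom, if_neg (show ¬n < k by omega), if_neg (show ¬n < k + 1 by omega)]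
  rw [show n - k = n - (k + 1) + 1 by omega, traj_succ']

theorem runFrom_succ_runFrom :
    runFrom f (k + 1) (runFrom f k xpre xk u) (f xk (u 0)) (fun i => u (i + 1)) =
      runFrom f k xpre xk u := by
  funext n
  by_cases hn : n < k + 1
  · exact runFrom_of_lt hn
  · exact (runFrom_eq_runFrom_succ _ (by omega)).symm

variable {Φ : Frag X}

theorem basicOf_runFrom : basicOf Φ (runFrom f k xpre xk u) k = basicOf Φ xpre k :=
  Frag.basicOf_congr fun _ ht => runFrom_of_lt ht

theorem basicOf_runFrom_succ :
    basicOf Φ (runFrom f k xpre xk u) (k + 1) = updateB Φ (basicOf Φ xpre k) k xk := by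
  rw [basicOf, basicOf_runFrom, runFrom_self]

theorem mem_oneStep_feasSet_succ (hsat : fsat Φ (runFrom f k xpre xk u) 0) :
    xk ∈ oneStep f (feasSet Φ f (k + 1) (basicOf Φ (runFrom f k xpre xk u) (k + 1))) :=
  ⟨u 0, _, rfl, fun i => u (i + 1), by rwa [runFrom_succ_runFrom]⟩

theorem mem_feasSet_of_mem_oneStep_feasSet_succ {N : ℕ} (hN : ∀ q t, Relevant Φ q t → t < N)
    {w : ℕ → X} (h : xk ∈ oneStep f (feasSet Φ f (k + 1) (updateB Φ (basicOf Φ w k) k xk))) :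
    xk ∈ feasSet Φ f k (basicOf Φ w k) := by
  obtain ⟨u0, xpre', hpre', uz, hsat⟩ := h
  let u : ℕ → U := fun | 0 => u0 | i + 1 => uz i
  refine ⟨w, rfl, u, (fsat_iff_of_basicOf_eq hN (m := k + 1) ?_ fun t ht => ?_).mpr hsat⟩
  · rw [basicOf_runFrom_succ, basicOf_runFrom, hpre']
  · exact runFrom_eq_runFrom_succ _ ht

end Trajectories

end STLMon

theorem feasSet_backward_recursion_general {X U : Type}
    (Φ : Frag X) (f : X → U → X) (T : ℕ)
    (hT : ∀ p, IsHNode Φ p → endOf Φ p ≤ T)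
    (k : ℕ) (I : BasicSet Φ)
    (hroot0 : rootVal Φ I ≠ SatVal.zero)
    (hreach : ∃ xpre : ℕ → X, basicOf Φ xpre k = I) :
    feasSet Φ f k I =
      ⋃ Is ∈ {J : BasicSet Φ | Succ Φ k I J},
        (consReg Φ Is k ∩
          oneStep f (if k = T then (Set.univ : Set X) else feasSet Φ f (k + 1) Is)) := by
  obtain ⟨w, rfl⟩ := hreach
  have hN : ∀ q t, Relevant Φ q t → t < T + 1 :=
    fun q t h => Nat.lt_succ_of_le (h.2.2.trans (hT q h.1))
  ext xk
  rw [mem_iUnion_succ_iff (inFam_basicOf w k) hroot0]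
  constructor
  · rintro ⟨xpre, hpre, u, hsat⟩
    rw [← hpre, ← basicOf_runFrom_succ (f := f) (u := u)]
    refine ⟨rootVal_basicOf_ne_zero_of_le hsat k.le_succ (by rwa [basicOf_runFrom, hpre]), ?_⟩
    split_ifs
    · exact ⟨u 0, trivial⟩
    · exact mem_oneStep_feasSet_succ hsat
  · rintro ⟨hroot, hstep⟩
    split_ifs at hstep with hkT
    · obtain ⟨u0, -⟩ := hstep
      subst hkT
      refine ⟨w, rfl, fun _ => u0, ?_⟩
      rwa [fsat_iff_rootVal_basicOf_ne_zero hN, basicOf_runFrom_succ]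
    · exact mem_feasSet_of_mem_oneStep_feasSet_succ hN hstep

/-- Backward recursion for feasible sets (correctness of the offline computation,
equation (13)): for every `k ∈ [0, T]` and every reachable basic set `I ∈ 𝕀_k` with
`ι^root_I ≠ 1`, the `I`-determined feasible set satisfies
`X_k^I = ⋃_{I_s ∈ succ(I,k)} ( H_k(I, I_s) ∩ Υ(X_{k+1}^{I_s}) )`, where for `k = T` one
sets `X_{T+1}^{I'} := 𝒳`. The horizon `T` exceeds the evaluation horizon of `Φ`. -/
theorem feasSet_backward_recursion {X U : Type} [Nonempty U]
    (Φ : Frag X) (f : X → U → X) (T : ℕ)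
    (hT : ∀ p, IsHNode Φ p → endOf Φ p ≤ T)
    (k : ℕ) (hk : k ≤ T) (I : BasicSet Φ)
    (hmem : InFam Φ I k) (hroot0 : rootVal Φ I ≠ SatVal.zero)
    (hreach : ∃ xpre : ℕ → X, basicOf Φ xpre k = I)
    (hroot1 : rootVal Φ I ≠ SatVal.one) :
    feasSet Φ f k I =
      ⋃ Is ∈ {J : BasicSet Φ | Succ Φ k I J},
        (consReg Φ Is k ∩
          oneStep f (if k = T then (Set.univ : Set X) else feasSet Φ f (k + 1) Is)) :=
  feasSet_backward_recursion_general Φ f T hT k I hroot0 hreach
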